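/- Let m ≥ 3. There is a constant Ĉ_m > 0 depending only on m such that the following holds for every N: for every loop γ, every oriented surface q with ∂q = γ in B_N, every integer j ≥ 1, and every vortex ν ∈ Λ with supp ν ⊆ B_{N-1}, ν(q) ≠ 0 and dist(supp ν, supp γ) = j, one has |(supp ν)^+| ≥ Ĉ_m·(j+1). -/
import Mathlib


/-!
Common setup: Ising lattice gauge theory (structure group `ℤ₂`) on `ℤ^m`,
following Forsström–Viklund, "Free energy and quark potential in Ising lattice
gauge theory via cluster expansion".

Since the structure group is `ℤ₂`, a `k`-form is determined by its values on
(representatives of) positively oriented cells, so we work with unoriented cells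
throughout: an edge is a pair `(v, dir)` (the edge from `v` to `v + e_dir`), a
plaquette is `(v, i, j)` (positively oriented when `i < j`), etc.
-/

noncomputable section

open Filter Topology
open scoped BigOperators Classical

namespace LGT

/-- Points of the lattice `ℤ^m`. -/
abbrev Pt (m : ℕ) := Fin m → ℤ

/-- The `i`-th unit vector of `ℤ^m`. -/
def unit (m : ℕ) (i : Fin m) : Pt m := fun j => if j = i then 1 else 0

/-- An edge of `ℤ^m`, from `v` to `v + unit dir`. -/
structure Edge (m : ℕ) where
  v : Pt m
  dir : Fin m
deriving DecidableEq

/-- A plaquette of `ℤ^m`, spanned at `v` by the directions `i, j`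
(positively oriented when `i < j`). -/
structure Plaq (m : ℕ) where
  v : Pt m
  i : Fin m
  j : Fin m
deriving DecidableEq

/-- A 3-cell of `ℤ^m`, spanned at `v` by the directions `i, j, k`. -/
structure Cell3 (m : ℕ) where
  v : Pt m
  i : Fin m
  j : Fin m
  k : Fin m
deriving DecidableEq

/-- `x ∈ B_N = [-N, N]^m`. -/
def inBox (m N : ℕ) (x : Pt m) : Prop := ∀ i, |x i| ≤ (N : ℤ)

/-- The box `B_N` as a finite set. -/
def boxFinset (m N : ℕ) : Finset (Pt m) := Finset.Icc (fun _ => -(N : ℤ)) (fun _ => (N : ℤ))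

/-- The edges of `B_N` (both endpoints in `B_N`); this is `E_N = C_1(B_N)` up to orientation. -/
def edgeFinset (m N : ℕ) : Finset (Edge m) :=
  ((boxFinset m N ×ˢ (Finset.univ : Finset (Fin m))).image
      (fun x => (⟨x.1, x.2⟩ : Edge m))).filter
    (fun e => inBox m N e.v ∧ inBox m N (e.v + unit m e.dir))

/-- The positively oriented plaquettes of `B_N` (all four vertices in `B_N`);
this is `P_N^+ = C_2(B_N)^+`. -/
def plaqFinset (m N : ℕ) : Finset (Plaq m) :=
  ((boxFinset m N ×ˢ
        ((Finset.univ : Finset (Fin m)) ×ˢ (Finset.univ : Finset (Fin m)))).image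
      (fun x => (⟨x.1, x.2.1, x.2.2⟩ : Plaq m))).filter
    (fun p => p.i < p.j ∧ inBox m N p.v ∧ inBox m N (p.v + unit m p.i + unit m p.j))

/-- The (positively oriented) 3-cells of `B_N` (all vertices in `B_N`). -/
def cell3Finset (m N : ℕ) : Finset (Cell3 m) :=
  ((boxFinset m N ×ˢ
        ((Finset.univ : Finset (Fin m)) ×ˢ (Finset.univ : Finset (Fin m)) ×ˢ
          (Finset.univ : Finset (Fin m)))).image
      (fun x => (⟨x.1, x.2.1, x.2.2.1, x.2.2.2⟩ : Cell3 m))).filter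
    (fun c => c.i < c.j ∧ c.j < c.k ∧ inBox m N c.v ∧
      inBox m N (c.v + unit m c.i + unit m c.j + unit m c.k))

/-- The four edges in the boundary of a plaquette. -/
def plaqBoundary (m : ℕ) (p : Plaq m) : Finset (Edge m) :=
  {⟨p.v, p.i⟩, ⟨p.v, p.j⟩, ⟨p.v + unit m p.j, p.i⟩, ⟨p.v + unit m p.i, p.j⟩}

/-- The six plaquettes in the boundary of a 3-cell. -/
def cellBoundary (m : ℕ) (c : Cell3 m) : Finset (Plaq m) :=
  {⟨c.v, c.i, c.j⟩, ⟨c.v, c.i, c.k⟩, ⟨c.v, c.j, c.k⟩,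
   ⟨c.v + unit m c.k, c.i, c.j⟩, ⟨c.v + unit m c.j, c.i, c.k⟩, ⟨c.v + unit m c.i, c.j, c.k⟩}

/-- `ℤ₂`-valued 2-forms (as functions on plaquettes; in `ℤ₂` orientation is immaterial). -/
abbrev Form2 (m : ℕ) := Plaq m → ZMod 2

/-- Exterior derivative of a 1-form. -/
def d1 (m : ℕ) (σ : Edge m → ZMod 2) : Form2 m := fun p => ∑ e ∈ plaqBoundary m p, σ e

/-- Exterior derivative of a 2-form, evaluated at a 3-cell. -/
def d2 (m : ℕ) (ω : Form2 m) (c : Cell3 m) : ZMod 2 := ∑ p ∈ cellBoundary m c, ω p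

/-- The (positively oriented) support of a 2-form within `B_N`: this is `(supp ω)^+`,
so the number of oriented plaquettes in the support is `2 * (supp2 m N ω).card`. -/
def supp2 (m N : ℕ) (ω : Form2 m) : Finset (Plaq m) := (plaqFinset m N).filter (fun p => ω p ≠ 0)

/-- The activity `φ_β(ω) = e^{-2β|supp ω|} = e^{-4β|(supp ω)^+|}`, complex `β`. -/
def wtC (m : ℕ) (β : ℂ) (N : ℕ) (ω : Form2 m) : ℂ :=
  Complex.exp (-(4 : ℂ) * β * ((supp2 m N ω).card : ℂ))

/-- The activity `φ_β(ω) = e^{-2β|supp ω|} = e^{-4β|(supp ω)^+|}`, real `β`. -/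
def wtR (m : ℕ) (β : ℝ) (N : ℕ) (ω : Form2 m) : ℝ :=
  Real.exp (-(4 : ℝ) * β * ((supp2 m N ω).card : ℝ))

/-- Gauge field configurations on `B_N`: `ℤ₂`-valued 1-forms on the edges of `B_N`. -/
abbrev Cfg (m N : ℕ) := {e // e ∈ edgeFinset m N} → ZMod 2

/-- Extension of a configuration on `B_N` by zero to all edges. -/
def extendE (m N : ℕ) (σ : Cfg m N) : Edge m → ZMod 2 :=
  fun e => if h : e ∈ edgeFinset m N then σ ⟨e, h⟩ else 0

/-- The partition function `Z_{β,N}`, complex inverse temperature. -/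
def Zc (m : ℕ) (β : ℂ) (N : ℕ) : ℂ := ∑ σ : Cfg m N, wtC m β N (d1 m (extendE m N σ))

/-- The partition function `Z_{β,N}`, real inverse temperature. -/
def Zr (m : ℕ) (β : ℝ) (N : ℕ) : ℝ := ∑ σ : Cfg m N, wtR m β N (d1 m (extendE m N σ))

/-- `σ(γ) = Σ_e γ[e]·σ(e) ∈ ℤ₂` for a 1-chain `γ` and a 1-form `σ`. -/
def pairing (m : ℕ) (γ : Edge m → ℤ) (σ : Edge m → ZMod 2) : ZMod 2 :=
  ∑ᶠ e : Edge m, (γ e : ZMod 2) * σ e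

/-- The Wilson loop observable `W_γ(σ) = ρ(σ(γ)) ∈ {±1}`. -/
def wilson (m : ℕ) (γ : Edge m → ℤ) (σ : Edge m → ZMod 2) : ℝ :=
  if pairing m γ σ = 0 then 1 else -1

/-- The finite-volume expectation `E_{β,N}[W_γ]`. -/
def expW (m : ℕ) (β : ℝ) (N : ℕ) (γ : Edge m → ℤ) : ℝ :=
  (∑ σ : Cfg m N, wilson m γ (extendE m N σ) * wtR m β N (d1 m (extendE m N σ))) / Zr m β N

/-- Support of a 1-chain. -/
def suppChain (m : ℕ) (γ : Edge m → ℤ) : Set (Edge m) := {e | γ e ≠ 0}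

/-- Boundary of a 1-chain, evaluated at a vertex. -/
def chainBd (m : ℕ) (γ : Edge m → ℤ) (x : Pt m) : ℤ :=
  ∑ i : Fin m, (γ ⟨x - unit m i, i⟩ - γ ⟨x, i⟩)

/-- A loop: a 1-chain with finite support, coefficients in `{-1,0,1}` and vanishing boundary. -/
def IsLoop (m : ℕ) (γ : Edge m → ℤ) : Prop :=
  (suppChain m γ).Finite ∧ (∀ e, γ e = -1 ∨ γ e = 0 ∨ γ e = 1) ∧ ∀ x, chainBd m γ x = 0

/-- The two endpoints of an edge. -/
def edgePts (m : ℕ) (e : Edge m) : Set (Pt m) := {e.v, e.v + unit m e.dir}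

/-- The four vertices of a plaquette. -/
def plaqPts (m : ℕ) (p : Plaq m) : Set (Pt m) :=
  {p.v, p.v + unit m p.i, p.v + unit m p.j, p.v + unit m p.i + unit m p.j}

/-- The edges of the support of `γ` incident to a vertex `x`. -/
def edgesAt (m : ℕ) (γ : Edge m → ℤ) (x : Pt m) : Set (Edge m) :=
  {e | e ∈ suppChain m γ ∧ x ∈ edgePts m e}

/-- A simple loop: a nonempty loop whose support forms a single vertex-disjoint cycle. -/
def IsSimpleLoop (m : ℕ) (γ : Edge m → ℤ) : Prop :=
  IsLoop m γ ∧ (suppChain m γ).Nonempty ∧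
  (∀ x : Pt m, (edgesAt m γ x).ncard = 0 ∨ (edgesAt m γ x).ncard = 2) ∧
  ∀ e ∈ suppChain m γ, ∀ e' ∈ suppChain m γ,
    Relation.ReflTransGen
      (fun a b : Edge m =>
        a ∈ suppChain m γ ∧ b ∈ suppChain m γ ∧ (edgePts m a ∩ edgePts m b).Nonempty) e e'

/-- Coefficient of the edge `e` in the boundary 1-chain of the plaquette `p`. -/
def bdCoeff (m : ℕ) (p : Plaq m) (e : Edge m) : ℤ :=
  (if e = (⟨p.v, p.i⟩ : Edge m) then 1 else 0)
    + (if e = (⟨p.v + unit m p.i, p.j⟩ : Edge m) then 1 else 0)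
    - (if e = (⟨p.v + unit m p.j, p.i⟩ : Edge m) then 1 else 0)
    - (if e = (⟨p.v, p.j⟩ : Edge m) then 1 else 0)

/-- Boundary of a 2-chain, evaluated at an edge. -/
def chain2Bd (m : ℕ) (q : Plaq m → ℤ) (e : Edge m) : ℤ := ∑ᶠ p : Plaq m, q p * bdCoeff m p e

/-- `q` is an oriented surface with boundary `γ`: a finitely supported 2-chain
(supported on positively oriented plaquettes) with `∂q = γ`. -/
def IsSurfaceFor (m : ℕ) (q : Plaq m → ℤ) (γ : Edge m → ℤ) : Prop :=
  {p : Plaq m | q p ≠ 0}.Finite ∧ (∀ p, q p ≠ 0 → p.i < p.j) ∧ ∀ e, chain2Bd m q e = γ e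

/-- Evaluation `ω(q) = Σ_p q[p]·ω(p) ∈ ℤ₂` of a 2-form on a 2-chain. -/
def eval2 (m : ℕ) (ω : Form2 m) (q : Plaq m → ℤ) : ZMod 2 :=
  ∑ᶠ p : Plaq m, (q p : ZMod 2) * ω p

/-- The 2-form `ω` is supported in `B_N`. -/
def supportedIn (m N : ℕ) (ω : Form2 m) : Prop := ∀ p, p ∉ plaqFinset m N → ω p = 0

/-- The 2-form `ω` is closed: `dω = 0` on every 3-cell of `B_N`. -/
def IsClosed2 (m N : ℕ) (ω : Form2 m) : Prop := ∀ c ∈ cell3Finset m N, d2 m ω c = 0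

/-- Adjacency in the graph `𝒢₂` of positively oriented plaquettes: the supports of the
coboundaries intersect, i.e. the two (distinct) plaquettes lie in the boundary of a
common 3-cell of `B_N`. -/
def plaqAdj (m N : ℕ) (p₁ p₂ : Plaq m) : Prop :=
  p₁ ≠ p₂ ∧ ∃ c ∈ cell3Finset m N, p₁ ∈ cellBoundary m c ∧ p₂ ∈ cellBoundary m c

/-- A set of plaquettes induces a connected subgraph of `𝒢₂`. -/
def connectedIn (m N : ℕ) (S : Finset (Plaq m)) : Prop :=
  ∀ p ∈ S, ∀ p' ∈ S,
    Relation.ReflTransGen (fun a b => a ∈ S ∧ b ∈ S ∧ plaqAdj m N a b) p p'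

/-- A vortex: a nonzero closed 2-form supported in `B_N` whose support induces a
connected subgraph of `𝒢₂`. -/
def IsVortex (m N : ℕ) (ω : Form2 m) : Prop :=
  ω ≠ 0 ∧ supportedIn m N ω ∧ IsClosed2 m N ω ∧ connectedIn m N (supp2 m N ω)

/-- `ν ∼ ν'`: some plaquettes of the supports coincide or are adjacent in `𝒢₂`. -/
def vSim (m N : ℕ) (ν ν' : Form2 m) : Prop :=
  ∃ p ∈ supp2 m N ν, ∃ p' ∈ supp2 m N ν', p = p' ∨ plaqAdj m N p p'

/-- A vortex cluster: a nonempty finite multiset of vortices admitting no splitting into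
two nonempty sub-multisets that are pairwise non-interacting. -/
def IsCluster (m N : ℕ) (V : Multiset (Form2 m)) : Prop :=
  V ≠ 0 ∧ (∀ ν ∈ V, IsVortex m N ν) ∧
    ¬∃ V₁ V₂ : Multiset (Form2 m), V₁ ≠ 0 ∧ V₂ ≠ 0 ∧ V = V₁ + V₂ ∧
      ∀ ν₁ ∈ V₁, ∀ ν₂ ∈ V₂, ¬vSim m N ν₁ ν₂

/-- The set `Ξ` of vortex clusters, as a type. -/
abbrev Cluster (m N : ℕ) := {V : Multiset (Form2 m) // IsCluster m N V}

/-- `|𝒱| = Σ_ν n_𝒱(ν)·|(supp ν)^+|`. -/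
def clusterSize (m N : ℕ) (V : Multiset (Form2 m)) : ℕ :=
  (V.map (fun ν => (supp2 m N ν).card)).sum

/-- `supp 𝒱 = ∪_{ν ∈ 𝒱} supp ν` (positively oriented plaquettes). -/
def clusterSupp (m N : ℕ) (V : Multiset (Form2 m)) : Set (Plaq m) :=
  {p | ∃ ν ∈ V, p ∈ supp2 m N ν}

/-- `𝒱(q) = Σ_ν n_𝒱(ν)·ν(q) ∈ ℤ₂`. -/
def evalCluster (m : ℕ) (V : Multiset (Form2 m)) (q : Plaq m → ℤ) : ZMod 2 :=
  (V.map (fun ν => eval2 m ν q)).sum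

/-- The Ursell function `U(𝒱)`: for an enumeration `ν₁, …, ν_k` of `𝒱` with multiplicity,
the sum of `(-1)^{#edges}` over all connected graphs on `{1, …, k}` all of whose edges
`{i,j}` satisfy `ν_i ∼ ν_j`. -/
def ursell (m N : ℕ) (V : Multiset (Form2 m)) : ℤ :=
  ∑ E ∈ Finset.univ.filter
      (fun E : Finset (Sym2 (Fin V.toList.length)) =>
        (∀ e ∈ E, ¬e.IsDiag) ∧
        (∀ i j : Fin V.toList.length, s(i, j) ∈ E → vSim m N (V.toList.get i) (V.toList.get j)) ∧
        (∀ a b : Fin V.toList.length, Relation.ReflTransGen (fun x y => s(x, y) ∈ E) a b)),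
    (-1 : ℤ) ^ E.card

/-- `Ψ_β(𝒱) = U(𝒱)·φ_β(𝒱) = U(𝒱)·e^{-4β|𝒱|}`, complex `β`. -/
def PsiC (m : ℕ) (β : ℂ) (N : ℕ) (V : Multiset (Form2 m)) : ℂ :=
  (ursell m N V : ℂ) * Complex.exp (-(4 : ℂ) * β * (clusterSize m N V : ℂ))

/-- `Ψ_β(𝒱) = U(𝒱)·φ_β(𝒱) = U(𝒱)·e^{-4β|𝒱|}`, real `β`. -/
def PsiR (m : ℕ) (β : ℝ) (N : ℕ) (V : Multiset (Form2 m)) : ℝ :=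
  (ursell m N V : ℝ) * Real.exp (-(4 : ℝ) * β * (clusterSize m N V : ℝ))

/-- The representation `ρ : ℤ₂ → ℝ`, `g ↦ e^{iπg}`. -/
def rho (g : ZMod 2) : ℝ := if g = 0 then 1 else -1

/-- `Ψ_{β,q}(𝒱) = Ψ_β(𝒱)·ρ(𝒱(q))`. -/
def PsiRq (m : ℕ) (β : ℝ) (N : ℕ) (q : Plaq m → ℤ) (V : Multiset (Form2 m)) : ℝ :=
  PsiR m β N V * rho (evalCluster m V q)

/-- `β₀(m) = (1/2)·log(10(m-2)) + 1/6`. -/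
def beta0 (m : ℕ) : ℝ := Real.log (10 * ((m : ℝ) - 2)) / 2 + 1 / 6

/-- The `ℓ¹`-distance on `ℤ^m`. -/
def dist1 (m : ℕ) (x y : Pt m) : ℕ := ∑ i, (x i - y i).natAbs

/-- The boundary of the box `B_N`. -/
def boxBoundary (m N : ℕ) : Set (Pt m) := {x | inBox m N x ∧ ∃ i, |x i| = (N : ℤ)}

/-- The support of `γ` is at `ℓ¹`-distance greater than `d` from the boundary of `B_N`. -/
def farFromBoundary (m N d : ℕ) (γ : Edge m → ℤ) : Prop :=
  ∀ e ∈ suppChain m γ, ∀ x ∈ edgePts m e, ∀ y ∈ boxBoundary m N, d < dist1 m x y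

/-- Corners of `γ`: pairs of non-parallel edges of `γ` lying in the boundary of a
common plaquette, so `ℓ_c(γ) = (corners m γ).ncard`. -/
def corners (m : ℕ) (γ : Edge m → ℤ) : Set (Sym2 (Edge m)) :=
  {s | ∃ e e' : Edge m, s = s(e, e') ∧ e ∈ suppChain m γ ∧ e' ∈ suppChain m γ ∧
    e.dir ≠ e'.dir ∧ ∃ p : Plaq m, p.i < p.j ∧ e ∈ plaqBoundary m p ∧ e' ∈ plaqBoundary m p}

/-- Bottlenecks of `γ`: pairs of distinct parallel edges of `γ` lying in the boundary of a
common plaquette, so `ℓ_b(γ) = (bottlenecks m γ).ncard`. -/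
def bottlenecks (m : ℕ) (γ : Edge m → ℤ) : Set (Sym2 (Edge m)) :=
  {s | ∃ e e' : Edge m, s = s(e, e') ∧ e ∈ suppChain m γ ∧ e' ∈ suppChain m γ ∧
    e ≠ e' ∧ e.dir = e'.dir ∧ ∃ p : Plaq m, p.i < p.j ∧ e ∈ plaqBoundary m p ∧ e' ∈ plaqBoundary m p}

/-- The boundary 1-chain of the `R × T` rectangle based at `x` in the plane
spanned by the directions `i, j`. -/
def rectLoopF (m : ℕ) (x : Pt m) (i j : Fin m) (R T : ℕ) : Edge m → ℤ := fun e =>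
  (if e.dir = i ∧ ∃ a : ℕ, a < R ∧ e.v = x + (a : ℤ) • unit m i then 1 else 0)
    + (if e.dir = j ∧ ∃ b : ℕ, b < T ∧ e.v = x + (R : ℤ) • unit m i + (b : ℤ) • unit m j then 1 else 0)
    - (if e.dir = i ∧ ∃ a : ℕ, a < R ∧ e.v = x + (a : ℤ) • unit m i + (T : ℤ) • unit m j then 1 else 0)
    - (if e.dir = j ∧ ∃ b : ℕ, b < T ∧ e.v = x + (b : ℤ) • unit m j then 1 else 0)

/-- `γ` is an axis-parallel rectangular loop with side lengths `R` and `T`. -/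
def IsRectLoop (m : ℕ) (R T : ℕ) (γ : Edge m → ℤ) : Prop :=
  ∃ (x : Pt m) (i j : Fin m), i ≠ j ∧ γ = rectLoopF m x i j R T

/-- The set of values `Σ_{𝒱 ∈ Ξ(B_N) : p ∈ supp 𝒱} |Ψ_{β*}(𝒱)|` over all `N` and `p`. -/
def CbetaSet (m : ℕ) (βs : ℝ) : Set ℝ :=
  {x | ∃ (N : ℕ) (p : Plaq m),
    x = ∑' V : {V : Multiset (Form2 m) // IsCluster m N V ∧ p ∈ clusterSupp m N V},
          |PsiR m βs N V.1|}

/-- `C_{β*} = sup_{N,p} Σ_{𝒱 ∈ Ξ(B_N) : p ∈ supp 𝒱} |Ψ_{β*}(𝒱)|`. -/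
def Cbeta (m : ℕ) (βs : ℝ) : ℝ := sSup (CbetaSet m βs)

/-- The `ℓ¹`-distance between a set of plaquettes and a set of edges
(via their vertex sets). -/
def plaqEdgeSetDist (m : ℕ) (S : Set (Plaq m)) (T : Set (Edge m)) : ℕ :=
  sInf {d : ℕ | ∃ p ∈ S, ∃ e ∈ T, ∃ x ∈ plaqPts m p, ∃ y ∈ edgePts m e, d = dist1 m x y}

end LGT
open LGT

namespace P19
open Finset

/-! ### ZMod 2 facts -/

lemma zadd : ∀ a : ZMod 2, a + a = 0 := by decide
lemma zaab : ∀ a b : ZMod 2, a + b + b = a := by decide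
lemma zcancel : ∀ a b : ZMod 2, a + (a + b) = b := by decide
lemma zL3 : ∀ a b c : ZMod 2, a + b + (b + c) = a + c := by decide
lemma zmove : ∀ a b c d : ZMod 2, a + b + c + d = 0 → a + b = c + d := by decide
lemma zsix : ∀ t1 t2 t3 t4 t5 t6 : ZMod 2,
    t1 + t2 + t3 + t4 + t5 + t6 = 0 → t1 + t4 + t2 + t5 = t3 + t6 := by decide
lemma zeq_of_add : ∀ a b : ZMod 2, a + b = 0 → a = b := by decide
lemma zcorner : ∀ gv gi gj gw : ZMod 2,
    (gv + gi) + (gv + gj) + (gj + gw) + (gi + gw) = 0 := by decide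
lemma zeight : ∀ a1 b1 a2 b2 a3 b3 a4 b4 : ZMod 2,
    (a1 + b1) + (a2 + b2) + (a3 + b3) + (a4 + b4) =
      (a1 + a2 + a3 + a4) + (b1 + b2 + b3 + b4) := by decide
lemma zsix' : ∀ t1 t2 t3 t4 t5 t6 : ZMod 2,
    t1 + t2 + t3 + t4 + t5 + t6 = 0 → t1 + t2 + t4 + t5 = t3 + t6 := by decide
lemma zsub4 : ∀ a b c d : ZMod 2, a + b - c - d = a + (b + (c + d)) := by decide

/-! ### Points, units, coordinates -/

section pts
variable {m : ℕ}

lemma add_unit_apply (v : Pt m) (k l : Fin m) :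
    (v + unit m k) l = v l + if l = k then 1 else 0 := rfl

lemma self_ne_add_unit (v : Pt m) (k : Fin m) : v ≠ v + unit m k := by
  intro h
  have h2 := congrFun h k
  rw [add_unit_apply, if_pos rfl] at h2
  omega

/-- Replace coordinate `i` of `v` by `c`. -/
def setC (i : Fin m) (v : Pt m) (c : ℤ) : Pt m := fun l => if l = i then c else v l

lemma setC_apply_self (i : Fin m) (v : Pt m) (c : ℤ) : setC i v c i = c := by
  simp [setC]

lemma setC_apply_ne (i l : Fin m) (v : Pt m) (c : ℤ) (h : l ≠ i) : setC i v c l = v l := by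
  simp [setC, h]

lemma setC_self (i : Fin m) (v : Pt m) : setC i v (v i) = v := by
  funext l
  simp only [setC]
  split
  · rename_i h; rw [h]
  · rfl

lemma setC_add_unit (i k : Fin m) (h : k ≠ i) (v : Pt m) (c : ℤ) :
    setC i (v + unit m k) c = setC i v c + unit m k := by
  funext l
  by_cases hl : l = i
  · subst hl
    rw [setC_apply_self, add_unit_apply, setC_apply_self, if_neg (fun hik => h hik.symm)]
    ring
  · rw [setC_apply_ne _ _ _ _ hl, add_unit_apply, add_unit_apply, setC_apply_ne _ _ _ _ hl]

lemma setC_absorb (i : Fin m) (v : Pt m) (c : ℤ) :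
    setC i (v + unit m i) c = setC i v c := by
  funext l
  by_cases hl : l = i
  · subst hl; rw [setC_apply_self, setC_apply_self]
  · rw [setC_apply_ne _ _ _ _ hl, setC_apply_ne _ _ _ _ hl, add_unit_apply, if_neg hl]
    ring

lemma setC_add_unit_self (i : Fin m) (v : Pt m) (c : ℤ) :
    setC i v c + unit m i = setC i v (c + 1) := by
  funext l
  by_cases hl : l = i
  · subst hl; rw [add_unit_apply, if_pos rfl, setC_apply_self, setC_apply_self]
  · rw [add_unit_apply, if_neg hl, setC_apply_ne _ _ _ _ hl, setC_apply_ne _ _ _ _ hl]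
    ring

end pts

/-! ### Interval sums over ℤ with values in ZMod 2 -/

section isums

lemma sum_win {f : ℤ → ZMod 2} {lo₀ hi₀ : ℤ} (hf : ∀ x, f x ≠ 0 → lo₀ ≤ x ∧ x ≤ hi₀)
    {lo hi lo' hi' : ℤ} (h1 : lo ≤ lo₀) (h2 : hi₀ ≤ hi) (h1' : lo' ≤ lo₀) (h2' : hi₀ ≤ hi') :
    ∑ x ∈ Finset.Icc lo hi, f x = ∑ x ∈ Finset.Icc lo' hi', f x := by
  have key : ∀ lo hi : ℤ, lo ≤ lo₀ → hi₀ ≤ hi →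
      ∑ x ∈ Finset.Icc lo₀ hi₀, f x = ∑ x ∈ Finset.Icc lo hi, f x := by
    intro lo hi h1 h2
    apply Finset.sum_subset (Finset.Icc_subset_Icc h1 h2)
    intro x hx hnx
    by_contra hfx
    rcases hf x hfx with ⟨u1, u2⟩
    rw [Finset.mem_Icc] at hnx
    exact hnx ⟨u1, u2⟩
  rw [← key lo hi h1 h2, key lo' hi' h1' h2']

lemma sum_top (f : ℤ → ZMod 2) {lo hi : ℤ} (h : lo ≤ hi + 1) :
    ∑ x ∈ Finset.Icc lo (hi + 1), f x = (∑ x ∈ Finset.Icc lo hi, f x) + f (hi + 1) := by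
  rw [show Finset.Icc lo (hi + 1) = insert (hi + 1) (Finset.Icc lo hi) from by
        ext x; simp only [Finset.mem_Icc, Finset.mem_insert]; omega,
      Finset.sum_insert (by simp only [Finset.mem_Icc]; omega)]
  exact add_comm _ _

lemma sum_bot (f : ℤ → ZMod 2) {lo hi : ℤ} (h : lo ≤ hi) :
    ∑ x ∈ Finset.Icc lo hi, f x = f lo + ∑ x ∈ Finset.Icc (lo + 1) hi, f x := by
  rw [show Finset.Icc lo hi = insert lo (Finset.Icc (lo + 1) hi) from by
        ext x; simp only [Finset.mem_Icc, Finset.mem_insert]; omega,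
      Finset.sum_insert (by simp only [Finset.mem_Icc]; omega)]

lemma sum_tele (f : ℤ → ZMod 2) (lo : ℤ) :
    ∀ hi, lo - 1 ≤ hi → (∑ x ∈ Finset.Icc lo hi, (f x + f (x + 1))) = f lo + f (hi + 1) := by
  refine Int.le_induction ?_ ?_
  · rw [Finset.Icc_eq_empty (by omega), Finset.sum_empty,
      show lo - 1 + 1 = lo from by ring]
    exact (zadd (f lo)).symm
  · intro n hn ih
    rw [sum_top _ (by omega), ih]
    exact zL3 (f lo) (f (n + 1)) (f (n + 1 + 1))

end isums

/-! ### Membership characterizations and cell combinatorics -/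

section lgtbasic
variable {m : ℕ}

lemma mem_boxFinset {N : ℕ} {x : Pt m} : x ∈ boxFinset m N ↔ inBox m N x := by
  rw [boxFinset, Finset.mem_Icc, Pi.le_def, Pi.le_def]
  constructor
  · rintro ⟨h1, h2⟩ i
    rw [abs_le]
    exact ⟨h1 i, h2 i⟩
  · intro h
    constructor <;> intro i <;> rcases abs_le.mp (h i) with ⟨u1, u2⟩
    · exact u1
    · exact u2

lemma mem_plaqF {N : ℕ} {p : Plaq m} :
    p ∈ plaqFinset m N ↔
      p.i < p.j ∧ inBox m N p.v ∧ inBox m N (p.v + unit m p.i + unit m p.j) := by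
  obtain ⟨v, i, j⟩ := p
  constructor
  · intro h
    exact (Finset.mem_filter.mp h).2
  · intro h
    refine Finset.mem_filter.mpr ⟨Finset.mem_image.mpr ⟨⟨v, i, j⟩, ?_, rfl⟩, h⟩
    exact Finset.mem_product.mpr ⟨mem_boxFinset.mpr h.2.1,
      Finset.mem_product.mpr ⟨Finset.mem_univ _, Finset.mem_univ _⟩⟩

lemma mem_cell3F {N : ℕ} {c : Cell3 m} :
    c ∈ cell3Finset m N ↔
      c.i < c.j ∧ c.j < c.k ∧ inBox m N c.v ∧
        inBox m N (c.v + unit m c.i + unit m c.j + unit m c.k) := by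
  obtain ⟨v, i, j, k⟩ := c
  constructor
  · intro h
    exact (Finset.mem_filter.mp h).2
  · intro h
    refine Finset.mem_filter.mpr ⟨Finset.mem_image.mpr ⟨⟨v, i, j, k⟩, ?_, rfl⟩, h⟩
    exact Finset.mem_product.mpr ⟨mem_boxFinset.mpr h.2.2.1,
      Finset.mem_product.mpr ⟨Finset.mem_univ _,
        Finset.mem_product.mpr ⟨Finset.mem_univ _, Finset.mem_univ _⟩⟩⟩

lemma bd_cases {p : Plaq m} {e : Edge m} (h : bdCoeff m p e ≠ 0) :
    e = (⟨p.v, p.i⟩ : Edge m) ∨ e = (⟨p.v + unit m p.i, p.j⟩ : Edge m) ∨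
      e = (⟨p.v + unit m p.j, p.i⟩ : Edge m) ∨ e = (⟨p.v, p.j⟩ : Edge m) := by
  by_contra hc
  push_neg at hc
  obtain ⟨h1, h2, h3, h4⟩ := hc
  rw [bdCoeff, if_neg h1, if_neg h2, if_neg h3, if_neg h4] at h
  simp at h

lemma d2_expand (ν : Form2 m) (w : Pt m) (a b c : Fin m) (hab : a < b) (hbc : b < c) :
    d2 m ν ⟨w, a, b, c⟩ =
      ν ⟨w, a, b⟩ + ν ⟨w, a, c⟩ + ν ⟨w, b, c⟩ + ν ⟨w + unit m c, a, b⟩ +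
        ν ⟨w + unit m b, a, c⟩ + ν ⟨w + unit m a, b, c⟩ := by
  have hab' : a ≠ b := ne_of_lt hab
  have hbc' : b ≠ c := ne_of_lt hbc
  have hac' : a ≠ c := ne_of_lt (hab.trans hbc)
  have na := self_ne_add_unit w a
  have nb := self_ne_add_unit w b
  have nc := self_ne_add_unit w c
  rw [d2, cellBoundary]
  dsimp only
  rw [Finset.sum_insert (by
        simp [Plaq.mk.injEq, hab', hbc', hac', na, nb, nc]),
      Finset.sum_insert (by
        simp [Plaq.mk.injEq, hab', hbc', hac', na, nb, nc]),
      Finset.sum_insert (by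
        simp [Plaq.mk.injEq, hab', hbc', hac', na, nb, nc]),
      Finset.sum_insert (by
        simp [Plaq.mk.injEq, hab', hbc', hac', na, nb, nc]),
      Finset.sum_insert (by
        simp [Plaq.mk.injEq, hab', hbc', hac', na, nb, nc]),
      Finset.sum_singleton]
  ring

lemma cb_bound {c : Cell3 m} {p : Plaq m} (h : p ∈ cellBoundary m c) (i : Fin m) :
    c.v i ≤ p.v i ∧ p.v i ≤ c.v i + 1 := by
  rw [cellBoundary] at h
  simp only [Finset.mem_insert, Finset.mem_singleton] at h
  rcases h with h | h | h | h | h | h <;> subst h <;> dsimp only <;>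
    constructor <;> (try rw [add_unit_apply]) <;> (try split) <;> omega

/-- All-cells closedness from closedness in the box plus support in the smaller box. -/
lemma closedAll (N : ℕ) (ν : Form2 m) (hcl : IsClosed2 m N ν)
    (hA : ∀ p : Plaq m, ν p ≠ 0 → ∀ ℓ, |p.v ℓ| ≤ (N : ℤ) - 1) :
    ∀ (w : Pt m) (a b c : Fin m), a < b → b < c →
      ν ⟨w, a, b⟩ + ν ⟨w, a, c⟩ + ν ⟨w, b, c⟩ + ν ⟨w + unit m c, a, b⟩ +
        ν ⟨w + unit m b, a, c⟩ + ν ⟨w + unit m a, b, c⟩ = 0 := by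
  intro w a b c hab hbc
  have hab' : a ≠ b := ne_of_lt hab
  have hbc' : b ≠ c := ne_of_lt hbc
  have hac' : a ≠ c := ne_of_lt (hab.trans hbc)
  have nuz : ∀ (w' : Pt m) (i j ℓ : Fin m), (N : ℤ) - 1 < |w' ℓ| → ν ⟨w', i, j⟩ = 0 := by
    intro w' i j ℓ h
    by_contra hne
    exact absurd (hA _ hne ℓ) (not_le.mpr h)
  by_cases hin : inBox m N w ∧ inBox m N (w + unit m a + unit m b + unit m c)
  · have hmem : (⟨w, a, b, c⟩ : Cell3 m) ∈ cell3Finset m N :=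
      mem_cell3F.mpr ⟨hab, hbc, hin.1, hin.2⟩
    have hd := hcl _ hmem
    rwa [d2_expand ν w a b c hab hbc] at hd
  · have hex : ∃ ℓ : Fin m, (N : ℤ) + 1 ≤ |w ℓ| ∨
        (N : ℤ) + 1 ≤ |(w + unit m a + unit m b + unit m c) ℓ| := by
      by_contra hno
      push_neg at hno
      refine hin ⟨fun ℓ => Int.lt_add_one_iff.mp (hno ℓ).1,
        fun ℓ => Int.lt_add_one_iff.mp (hno ℓ).2⟩
    obtain ⟨ℓ, hl⟩ := hex
    have hW : ∀ t : ℤ, 0 ≤ t → t ≤ 1 → (N : ℤ) - 1 < |w ℓ + t| := by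
      have habs : ∀ s t : ℤ, 0 ≤ s → s ≤ 1 → 0 ≤ t → t ≤ 1 →
          (N : ℤ) + 1 ≤ |w ℓ + s| → (N : ℤ) - 1 < |w ℓ + t| := by
        intro s t hs1 hs2 ht1 ht2 hbig
        have h3 := abs_sub_abs_le_abs_sub (w ℓ + s) (w ℓ + t)
        rw [show w ℓ + s - (w ℓ + t) = s - t from by ring] at h3
        have h4 : |s - t| ≤ 1 := abs_le.mpr ⟨by omega, by omega⟩
        linarith
      intro t ht1 ht2
      rcases hl with hl | hl
      · exact habs 0 t le_rfl zero_le_one ht1 ht2 (by rwa [add_zero])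
      · set s : ℤ := (if ℓ = a then 1 else 0) + (if ℓ = b then 1 else 0) +
          (if ℓ = c then 1 else 0) with hs
        have hsum : (w + unit m a + unit m b + unit m c) ℓ = w ℓ + s := by
          rw [add_unit_apply, add_unit_apply, add_unit_apply, hs]
          ring
        have hsb : 0 ≤ s ∧ s ≤ 1 := by
          rw [hs]
          rcases eq_or_ne ℓ a with e1 | e1
          · subst e1
            rw [if_pos rfl, if_neg hab', if_neg hac']
            omega
          · rw [if_neg e1]
            rcases eq_or_ne ℓ b with e2 | e2
            · subst e2
              rw [if_pos rfl, if_neg hbc']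
              omega
            · rw [if_neg e2]
              split <;> omega
        rw [hsum] at hl
        exact habs s t hsb.1 hsb.2 ht1 ht2 hl
    have hW0 : (N : ℤ) - 1 < |w ℓ| := by
      have := hW 0 le_rfl zero_le_one
      rwa [add_zero] at this
    have hWu : ∀ k : Fin m, (N : ℤ) - 1 < |(w + unit m k) ℓ| := by
      intro k
      rw [add_unit_apply]
      split
      · exact hW 1 zero_le_one le_rfl
      · rwa [add_zero]
    rw [nuz w a b ℓ hW0, nuz w a c ℓ hW0, nuz w b c ℓ hW0,
      nuz _ a b ℓ (hWu c), nuz _ a c ℓ (hWu b), nuz _ b c ℓ (hWu a)]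
    simp

lemma dist1_two (z o : Fin m) (hzo : z ≠ o) (x y : Pt m)
    (h : ∀ i, i ≠ z → i ≠ o → x i = y i) :
    (dist1 m x y : ℤ) = |x z - y z| + |x o - y o| := by
  have h0 : ∀ i ∈ Finset.univ, i ∉ ({z, o} : Finset (Fin m)) → |x i - y i| = 0 := by
    intro i _ hi
    simp only [Finset.mem_insert, Finset.mem_singleton] at hi
    push_neg at hi
    rw [h i hi.1 hi.2, sub_self, abs_zero]
  calc (dist1 m x y : ℤ) = ∑ i : Fin m, |x i - y i| := by
        rw [dist1]
        push_cast [Int.natCast_natAbs]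
        rfl
    _ = ∑ i ∈ ({z, o} : Finset (Fin m)), |x i - y i| :=
        (Finset.sum_subset (Finset.subset_univ _) h0).symm
    _ = |x z - y z| + |x o - y o| := Finset.sum_pair hzo

end lgtbasic


/-! ### Coordinate windows of a connected vortex -/

section windowsec
variable {m : ℕ}

lemma window (N : ℕ) (ν : Form2 m) (hconn : connectedIn m N (supp2 m N ν))
    (hne : (supp2 m N ν).Nonempty) (i : Fin m) :
    ∃ a b : ℤ, (∀ p ∈ supp2 m N ν, a ≤ p.v i ∧ p.v i ≤ b) ∧
      b - a ≤ ((supp2 m N ν).card : ℤ) - 1 ∧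
      (∃ p ∈ supp2 m N ν, p.v i = a) ∧ (∃ p ∈ supp2 m N ν, p.v i = b) := by
  classical
  set V := supp2 m N ν with hV
  set img : Finset ℤ := V.image (fun p => p.v i) with himg
  have h0 : img.Nonempty := hne.image _
  set a := img.min' h0 with ha
  set b := img.max' h0 with hb
  have hbounds : ∀ p ∈ V, a ≤ p.v i ∧ p.v i ≤ b := fun p hp =>
    ⟨Finset.min'_le img _ (Finset.mem_image_of_mem _ hp),
     Finset.le_max' img _ (Finset.mem_image_of_mem _ hp)⟩
  obtain ⟨pa, hpa, hpa2⟩ := Finset.mem_image.mp (img.min'_mem h0)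
  obtain ⟨pb, hpb, hpb2⟩ := Finset.mem_image.mp (img.max'_mem h0)
  have hadj : ∀ p1 p2 : Plaq m, plaqAdj m N p1 p2 →
      p1.v i ≤ p2.v i + 1 ∧ p2.v i ≤ p1.v i + 1 := by
    rintro p1 p2 ⟨-, c, hc, h1, h2⟩
    have b1 := cb_bound h1 i
    have b2 := cb_bound h2 i
    omega
  have hivt : ∀ (p p' : Plaq m),
      Relation.ReflTransGen (fun a b => a ∈ V ∧ b ∈ V ∧ plaqAdj m N a b) p p' →
      ∀ c : ℤ, ((p.v i ≤ c ∧ c ≤ p'.v i) ∨ (p'.v i ≤ c ∧ c ≤ p.v i)) →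
      c = p.v i ∨ ∃ r ∈ V, r.v i = c := by
    intro p p' hpath
    induction hpath using Relation.ReflTransGen.head_induction_on with
    | refl =>
        intro c hc
        left
        omega
    | @head x y hab hpath ih =>
        intro c hc
        have hb := hadj _ _ hab.2.2
        by_cases hc' : (y.v i ≤ c ∧ c ≤ p'.v i) ∨ (p'.v i ≤ c ∧ c ≤ y.v i)
        · rcases ih c hc' with h | h
          · exact Or.inr ⟨y, hab.2.1, h.symm⟩
          · exact Or.inr h
        · left
          omega
  have hsub : Finset.Icc a b ⊆ img := by
    intro c hc
    rw [Finset.mem_Icc] at hc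
    have hpath := hconn pa hpa pb hpb
    rcases hivt pa pb hpath c (Or.inl ⟨by omega, by omega⟩) with h | h
    · exact Finset.mem_image.mpr ⟨pa, hpa, by omega⟩
    · obtain ⟨r, hr, hr2⟩ := h
      exact Finset.mem_image.mpr ⟨r, hr, hr2⟩
  have hcard := Finset.card_le_card hsub
  rw [Int.card_Icc] at hcard
  have himgc : img.card ≤ V.card := Finset.card_image_le
  have hable : a ≤ b := by
    have h1 := hbounds pa hpa
    omega
  refine ⟨a, b, hbounds, ?_, ⟨pa, hpa, hpa2⟩, ⟨pb, hpb, hpb2⟩⟩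
  omega

end windowsec

/-! ### The gauge potential construction -/

section construct
variable {m : ℕ}

/-- Support bound: all plaquettes of the support have all base coordinates `≤ N - 1`. -/
def HA (N : ℕ) (ν : Form2 m) : Prop :=
  ∀ p : Plaq m, ν p ≠ 0 → ∀ ℓ, |p.v ℓ| ≤ (N : ℤ) - 1

/-- Closedness on every (ordered) 3-cell of `ℤ^m`. -/
def HC (ν : Form2 m) : Prop :=
  ∀ (w : Pt m) (a b c : Fin m), a < b → b < c →
    ν ⟨w, a, b⟩ + ν ⟨w, a, c⟩ + ν ⟨w, b, c⟩ + ν ⟨w + unit m c, a, b⟩ +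
      ν ⟨w + unit m b, a, c⟩ + ν ⟨w + unit m a, b, c⟩ = 0

lemma nu_out {N : ℕ} {ν : Form2 m} (hA : HA N ν) {w : Pt m} {i j ℓ : Fin m}
    (h : (N : ℤ) - 1 < |w ℓ|) : ν ⟨w, i, j⟩ = 0 := by
  by_contra hne
  exact absurd (hA _ hne ℓ) (not_le.mpr h)

def col (N : ℕ) (ν : Form2 m) (z : Fin m) (v : Pt m) (d : Fin m) : ZMod 2 :=
  ∑ x ∈ Finset.Icc (-(N : ℤ) - 1) (N : ℤ), ν ⟨setC z v x, z, d⟩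

def sig2 (N : ℕ) (ν : Form2 m) (z : Fin m) (e : Edge m) : ZMod 2 :=
  if e.dir = z then 0
  else ∑ x ∈ Finset.Icc (-(N : ℤ) - 1) (e.v z - 1), ν ⟨setC z e.v x, z, e.dir⟩

def gfun (N : ℕ) (ν : Form2 m) (z o : Fin m) (v : Pt m) : ZMod 2 :=
  ∑ y ∈ Finset.Icc (v o) (N : ℤ), col N ν z (setC o v y) o

def lam (N : ℕ) (ν : Form2 m) (z o : Fin m) (v : Pt m) : ZMod 2 :=
  ∑ y ∈ Finset.Icc (-(N : ℤ) - 1) (N : ℤ), col N ν z (setC o v y) o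

def ghat (N : ℕ) (ν : Form2 m) (z o : Fin m) (zT : ℤ) (v : Pt m) : ZMod 2 :=
  if zT ≤ v z then gfun N ν z o v else 0

def sig3 (N : ℕ) (ν : Form2 m) (z o : Fin m) (zT : ℤ) (e : Edge m) : ZMod 2 :=
  sig2 N ν z e + (ghat N ν z o zT e.v + ghat N ν z o zT (e.v + unit m e.dir))

variable {N : ℕ} {ν : Form2 m} {z o : Fin m}

lemma abs_big_neg (N : ℕ) : (N : ℤ) - 1 < |(-(N : ℤ) - 1)| := by
  rw [abs_of_nonpos (by omega)]
  omega

lemma abs_big_pos (N : ℕ) : (N : ℤ) - 1 < |((N : ℤ) + 1)| := by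
  rw [abs_of_nonneg (by omega)]
  omega

lemma col_absorb_z (v : Pt m) (d : Fin m) :
    col N ν z (v + unit m z) d = col N ν z v d := by
  rw [col, col]
  apply Finset.sum_congr rfl
  intro x _
  rw [setC_absorb]

lemma col_out (hA : HA N ν) {v : Pt m} (d : Fin m) {i : Fin m} (hiz : i ≠ z)
    (h : (N : ℤ) - 1 < |v i|) : col N ν z v d = 0 := by
  rw [col]
  apply Finset.sum_eq_zero
  intro x _
  exact nu_out hA (ℓ := i) (show ((N : ℤ) - 1 < |(setC z v x) i|) by
    rwa [setC_apply_ne z i v x hiz])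

lemma colClosed (hA : HA N ν) (hC : HC ν) {d d' : Fin m} (h1 : z < d) (h2 : d < d')
    (v : Pt m) :
    col N ν z v d + col N ν z (v + unit m d') d + col N ν z v d' +
      col N ν z (v + unit m d) d' = 0 := by
  have hdz : d ≠ z := ne_of_gt h1
  have hd'z : d' ≠ z := ne_of_gt (h1.trans h2)
  have e2 : col N ν z (v + unit m d') d =
      ∑ x ∈ Finset.Icc (-(N : ℤ) - 1) (N : ℤ), ν ⟨setC z v x + unit m d', z, d⟩ := by
    rw [col]
    apply Finset.sum_congr rfl
    intro x _
    rw [setC_add_unit z d' hd'z]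
  have e4 : col N ν z (v + unit m d) d' =
      ∑ x ∈ Finset.Icc (-(N : ℤ) - 1) (N : ℤ), ν ⟨setC z v x + unit m d, z, d'⟩ := by
    rw [col]
    apply Finset.sum_congr rfl
    intro x _
    rw [setC_add_unit z d hdz]
  rw [col, e2, col, e4, ← Finset.sum_add_distrib, ← Finset.sum_add_distrib,
    ← Finset.sum_add_distrib]
  have hpt : ∀ x ∈ Finset.Icc (-(N : ℤ) - 1) (N : ℤ),
      ν ⟨setC z v x, z, d⟩ + ν ⟨setC z v x + unit m d', z, d⟩ + ν ⟨setC z v x, z, d'⟩ +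
        ν ⟨setC z v x + unit m d, z, d'⟩
      = ν ⟨setC z v x, d, d'⟩ + ν ⟨setC z v (x + 1), d, d'⟩ := by
    intro x _
    have h6 := hC (setC z v x) z d d' h1 h2
    rw [setC_add_unit_self] at h6
    exact zsix _ _ _ _ _ _ h6
  rw [Finset.sum_congr rfl hpt,
    sum_tele (fun x => ν ⟨setC z v x, d, d'⟩) _ _ (by omega),
    nu_out hA (ℓ := z) (show ((N : ℤ) - 1 < |(setC z v (-(N : ℤ) - 1)) z|) by
      rw [setC_apply_self]; exact abs_big_neg N),
    nu_out hA (ℓ := z) (show ((N : ℤ) - 1 < |(setC z v ((N : ℤ) + 1)) z|) by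
      rw [setC_apply_self]; exact abs_big_pos N)]
  simp

end construct


section construct2
variable {m : ℕ} {N : ℕ} {ν : Form2 m} {z o : Fin m}

lemma gfun_absorb_z (hzo : z ≠ o) (v : Pt m) :
    gfun N ν z o (v + unit m z) = gfun N ν z o v := by
  rw [gfun, gfun, add_unit_apply, if_neg (fun h => hzo h.symm)]
  rw [add_zero]
  apply Finset.sum_congr rfl
  intro y _
  rw [setC_add_unit o z hzo, col_absorb_z]

lemma dsig2 (hA : HA N ν) (hC : HC ν) (hz0 : ∀ d : Fin m, d ≠ z → z < d)
    {v : Pt m} {i j : Fin m} (hij : i < j) (hvz : -(N : ℤ) ≤ v z) :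
    sig2 N ν z ⟨v, i⟩ + sig2 N ν z ⟨v, j⟩ + sig2 N ν z ⟨v + unit m j, i⟩ +
      sig2 N ν z ⟨v + unit m i, j⟩ = ν ⟨v, i, j⟩ := by
  have hzj : z < j := by
    rcases eq_or_ne i z with h | h
    · exact h ▸ hij
    · exact (hz0 i h).trans hij
  have hjz : j ≠ z := ne_of_gt hzj
  have hzj' : z ≠ j := ne_of_lt hzj
  rcases eq_or_ne i z with hiz | hiz
  · subst hiz
    have t1 : sig2 N ν i ⟨v, i⟩ = 0 := by simp [sig2]
    have t3 : sig2 N ν i ⟨v + unit m j, i⟩ = 0 := by simp [sig2]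
    have t2 : sig2 N ν i ⟨v, j⟩ =
        ∑ x ∈ Finset.Icc (-(N : ℤ) - 1) (v i - 1), ν ⟨setC i v x, i, j⟩ := by
      simp only [sig2, if_neg hjz]
    have t4 : sig2 N ν i ⟨v + unit m i, j⟩ =
        ∑ x ∈ Finset.Icc (-(N : ℤ) - 1) (v i - 1 + 1), ν ⟨setC i v x, i, j⟩ := by
      simp only [sig2, if_neg hjz]
      rw [add_unit_apply, if_pos rfl, show v i + 1 - 1 = v i - 1 + 1 from by ring]
      apply Finset.sum_congr rfl
      intro x _
      rw [setC_absorb]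
    rw [t1, t2, t3, t4, zero_add, add_zero, sum_top _ (by omega), zcancel,
      show v i - 1 + 1 = v i from by ring, setC_self]
  · have hzi : z < i := hz0 i hiz
    have hzi' : z ≠ i := ne_of_lt hzi
    have t1 : sig2 N ν z ⟨v, i⟩ =
        ∑ x ∈ Finset.Icc (-(N : ℤ) - 1) (v z - 1), ν ⟨setC z v x, z, i⟩ := by
      simp only [sig2, if_neg hiz]
    have t2 : sig2 N ν z ⟨v, j⟩ =
        ∑ x ∈ Finset.Icc (-(N : ℤ) - 1) (v z - 1), ν ⟨setC z v x, z, j⟩ := by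
      simp only [sig2, if_neg hjz]
    have t3 : sig2 N ν z ⟨v + unit m j, i⟩ =
        ∑ x ∈ Finset.Icc (-(N : ℤ) - 1) (v z - 1), ν ⟨setC z v x + unit m j, z, i⟩ := by
      simp only [sig2, if_neg hiz]
      rw [add_unit_apply, if_neg hzj', add_zero]
      apply Finset.sum_congr rfl
      intro x _
      rw [setC_add_unit z j hjz]
    have t4 : sig2 N ν z ⟨v + unit m i, j⟩ =
        ∑ x ∈ Finset.Icc (-(N : ℤ) - 1) (v z - 1), ν ⟨setC z v x + unit m i, z, j⟩ := by
      simp only [sig2, if_neg hjz]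
      rw [add_unit_apply, if_neg hzi', add_zero]
      apply Finset.sum_congr rfl
      intro x _
      rw [setC_add_unit z i (ne_of_gt hzi)]
    rw [t1, t2, t3, t4, ← Finset.sum_add_distrib, ← Finset.sum_add_distrib,
      ← Finset.sum_add_distrib]
    have hpt : ∀ x ∈ Finset.Icc (-(N : ℤ) - 1) (v z - 1),
        ν ⟨setC z v x, z, i⟩ + ν ⟨setC z v x, z, j⟩ + ν ⟨setC z v x + unit m j, z, i⟩ +
          ν ⟨setC z v x + unit m i, z, j⟩
        = ν ⟨setC z v x, i, j⟩ + ν ⟨setC z v (x + 1), i, j⟩ := by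
      intro x _
      have h6 := hC (setC z v x) z i j hzi hij
      rw [setC_add_unit_self] at h6
      exact zsix' _ _ _ _ _ _ h6
    rw [Finset.sum_congr rfl hpt,
      sum_tele (fun x => ν ⟨setC z v x, i, j⟩) _ _ (by omega),
      nu_out hA (ℓ := z) (show ((N : ℤ) - 1 < |(setC z v (-(N : ℤ) - 1)) z|) by
        rw [setC_apply_self]; exact abs_big_neg N),
      show v z - 1 + 1 = v z from by ring, setC_self, zero_add]

lemma dsig3 (hA : HA N ν) (hC : HC ν) (hz0 : ∀ d : Fin m, d ≠ z → z < d) (zT : ℤ)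
    {v : Pt m} {i j : Fin m} (hij : i < j) (hvz : -(N : ℤ) ≤ v z) :
    sig3 N ν z o zT ⟨v, i⟩ + sig3 N ν z o zT ⟨v, j⟩ + sig3 N ν z o zT ⟨v + unit m j, i⟩ +
      sig3 N ν z o zT ⟨v + unit m i, j⟩ = ν ⟨v, i, j⟩ := by
  simp only [sig3]
  rw [zeight, dsig2 hA hC hz0 hij hvz, add_right_comm v (unit m j) (unit m i), zcorner,
    add_zero]

lemma dg_o (hzo : z ≠ o) {v : Pt m} (hvo : v o ≤ (N : ℤ)) :
    gfun N ν z o v + gfun N ν z o (v + unit m o) = col N ν z v o := by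
  have h1 : gfun N ν z o (v + unit m o) =
      ∑ y ∈ Finset.Icc (v o + 1) (N : ℤ), col N ν z (setC o v y) o := by
    rw [gfun, add_unit_apply, if_pos rfl]
    apply Finset.sum_congr rfl
    intro y _
    rw [setC_absorb]
  rw [gfun, h1, sum_bot _ hvo, zaab, setC_self]

lemma dg_d (hA : HA N ν) (hC : HC ν) (hzo : z < o) {d : Fin m} (hod : o < d)
    {v : Pt m} (hvo : v o ≤ (N : ℤ) + 1) :
    gfun N ν z o v + gfun N ν z o (v + unit m d) = col N ν z v d := by
  have hdo : d ≠ o := ne_of_gt hod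
  have h1 : gfun N ν z o (v + unit m d) =
      ∑ y ∈ Finset.Icc (v o) (N : ℤ), col N ν z (setC o v y + unit m d) o := by
    rw [gfun, add_unit_apply, if_neg (fun h => hdo h.symm), add_zero]
    apply Finset.sum_congr rfl
    intro y _
    rw [setC_add_unit o d hdo]
  rw [gfun, h1, ← Finset.sum_add_distrib]
  have hpt : ∀ y ∈ Finset.Icc (v o) (N : ℤ),
      col N ν z (setC o v y) o + col N ν z (setC o v y + unit m d) o
        = col N ν z (setC o v y) d + col N ν z (setC o v (y + 1)) d := by
    intro y _
    have h4 := colClosed hA hC hzo hod (setC o v y)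
    rw [setC_add_unit_self] at h4
    exact zmove _ _ _ _ h4
  rw [Finset.sum_congr rfl hpt,
    sum_tele (fun y => col N ν z (setC o v y) d) _ _ (by omega), setC_self,
    col_out hA (v := setC o v ((N : ℤ) + 1)) (i := o) d (ne_of_gt hzo)
      (by rw [setC_apply_self]; exact abs_big_pos N),
    add_zero]

lemma lam_shift (hA : HA N ν) (hC : HC ν) (hzo : z < o) {d2 : Fin m} (hod : o < d2)
    (v : Pt m) : lam N ν z o (v + unit m d2) = lam N ν z o v := by
  have hdo : d2 ≠ o := ne_of_gt hod
  have h1 : lam N ν z o (v + unit m d2) =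
      ∑ y ∈ Finset.Icc (-(N : ℤ) - 1) (N : ℤ), col N ν z (setC o v y + unit m d2) o := by
    rw [lam]
    apply Finset.sum_congr rfl
    intro y _
    rw [setC_add_unit o d2 hdo]
  have hpt : ∀ y ∈ Finset.Icc (-(N : ℤ) - 1) (N : ℤ),
      col N ν z (setC o v y) o + col N ν z (setC o v y + unit m d2) o
        = col N ν z (setC o v y) d2 + col N ν z (setC o v (y + 1)) d2 := by
    intro y _
    have h4 := colClosed hA hC hzo hod (setC o v y)
    rw [setC_add_unit_self] at h4
    exact zmove _ _ _ _ h4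
  have hzero : lam N ν z o v + lam N ν z o (v + unit m d2) = 0 := by
    rw [lam, h1, ← Finset.sum_add_distrib, Finset.sum_congr rfl hpt,
      sum_tele (fun y => col N ν z (setC o v y) d2) _ _ (by omega),
      col_out hA (v := setC o v (-(N : ℤ) - 1)) (i := o) d2 (ne_of_gt hzo)
        (by rw [setC_apply_self]; exact abs_big_neg N),
      col_out hA (v := setC o v ((N : ℤ) + 1)) (i := o) d2 (ne_of_gt hzo)
        (by rw [setC_apply_self]; exact abs_big_pos N), add_zero]
  exact (zeq_of_add _ _ hzero).symm

lemma lam_zero (hA : HA N ν) (hC : HC ν) (hzo : z < o) {d2 : Fin m} (hod : o < d2)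
    (v : Pt m) : lam N ν z o v = 0 := by
  have hshift : ∀ (M : ℕ) (w : Pt m),
      lam N ν z o w = lam N ν z o (w + (M : ℤ) • unit m d2) := by
    intro M
    induction M with
    | zero => intro w; simp
    | succ M ih =>
        intro w
        have hrw : w + ((M + 1 : ℕ) : ℤ) • unit m d2 =
            (w + unit m d2) + (M : ℤ) • unit m d2 := by
          push_cast
          rw [add_smul, one_smul]
          abel
        rw [hrw, ← ih (w + unit m d2), lam_shift hA hC hzo hod]
  set M : ℕ := ((N : ℤ) + 1 - v d2).toNat + 1 with hM
  have htn := Int.self_le_toNat ((N : ℤ) + 1 - v d2)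
  have hbig : (N : ℤ) + 1 ≤ v d2 + (M : ℤ) := by
    rw [hM]
    push_cast
    omega
  rw [hshift M v, lam]
  apply Finset.sum_eq_zero
  intro y _
  apply col_out hA (i := d2) o (ne_of_gt (hzo.trans hod))
  rw [setC_apply_ne o d2 _ _ (ne_of_gt hod)]
  have hval : (v + (M : ℤ) • unit m d2) d2 = v d2 + (M : ℤ) := by
    have : ((M : ℤ) • unit m d2) d2 = (M : ℤ) := by
      rw [Pi.smul_apply, unit, if_pos rfl, smul_eq_mul, mul_one]
    rw [Pi.add_apply, this]
  rw [hval, abs_of_nonneg (by omega)]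
  omega

end construct2


section bigzero
variable {m : ℕ} {N : ℕ} {ν : Form2 m} {z o : Fin m}

lemma sig3_zero (hA : HA N ν) (hC : HC ν)
    (hz0 : ∀ d : Fin m, d ≠ z → z < d) (ho0 : ∀ d : Fin m, d ≠ z → d ≠ o → o < d)
    (hzo : z < o) {d2 : Fin m} (hod2 : o < d2)
    (az bz ao bo : ℤ) (j : ℕ)
    (hwz : ∀ p : Plaq m, ν p ≠ 0 → az ≤ p.v z ∧ p.v z ≤ bz)
    (hwo : ∀ p : Plaq m, ν p ≠ 0 → ao ≤ p.v o ∧ p.v o ≤ bo)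
    (hazK : -(N : ℤ) + 1 ≤ az) (hbzK : bz ≤ (N : ℤ) - 1)
    (haoK : -(N : ℤ) + 1 ≤ ao) (hboK : bo ≤ (N : ℤ) - 1)
    (hj1 : bz - az < (j : ℤ)) (hj2 : bz - az + (bo - ao) < (j : ℤ))
    (e : Edge m) (hev : ∀ ℓ, |e.v ℓ| ≤ (N : ℤ)) (hevd : e.v e.dir ≤ (N : ℤ) - 1)
    (hfar : ∀ p : Plaq m, ν p ≠ 0 → (∀ i : Fin m, i ≠ z → i ≠ o → p.v i = e.v i) →
      (j : ℤ) ≤ |p.v z - e.v z| + |p.v o - e.v o|) :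
    sig3 N ν z o (bz + 1) e = 0 := by
  obtain ⟨v, d⟩ := e
  have hev' : ∀ ℓ, |v ℓ| ≤ (N : ℤ) := hev
  have hevd' : v d ≤ (N : ℤ) - 1 := hevd
  have hfar' : ∀ p : Plaq m, ν p ≠ 0 → (∀ i : Fin m, i ≠ z → i ≠ o → p.v i = v i) →
      (j : ℤ) ≤ |p.v z - v z| + |p.v o - v o| := hfar
  simp only [sig3]
  by_cases hdz : d = z
  · subst hdz
    have hs2 : sig2 N ν d ⟨v, d⟩ = 0 := by simp [sig2]
    have hvz1 : (v + unit m d) d = v d + 1 := by rw [add_unit_apply, if_pos rfl]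
    rw [hs2, zero_add]
    rcases lt_trichotomy (v d) bz with hlt | heq | hgt
    · have c1 : ghat N ν d o (bz + 1) v = 0 := by
        unfold ghat
        rw [if_neg (by omega)]
      have c2 : ghat N ν d o (bz + 1) (v + unit m d) = 0 := by
        unfold ghat
        rw [if_neg (by rw [hvz1]; omega)]
      rw [c1, c2, add_zero]
    · have c1 : ghat N ν d o (bz + 1) v = 0 := by
        unfold ghat
        rw [if_neg (by omega)]
      have c2 : ghat N ν d o (bz + 1) (v + unit m d) = gfun N ν d o v := by
        unfold ghat
        rw [if_pos (by rw [hvz1]; omega), gfun_absorb_z (ne_of_lt hzo)]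
      rw [c1, c2, zero_add]
      by_contra hg
      have hvo : ao < v o := by
        by_contra hvo
        push_neg at hvo
        apply hg
        have hsupp : ∀ y, col N ν d (setC o v y) o ≠ 0 → ao ≤ y ∧ y ≤ bo := by
          intro y hy
          rw [col] at hy
          obtain ⟨x, -, hx⟩ := Finset.exists_ne_zero_of_sum_ne_zero hy
          have h5 := hwo _ hx
          dsimp only at h5
          rwa [setC_apply_ne d o _ _ (ne_of_gt hzo), setC_apply_self] at h5
        have hlam : gfun N ν d o v = lam N ν d o v := by
          rw [gfun, lam]
          exact sum_win hsupp hvo (by omega) (by omega) (by omega)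
        rw [hlam]
        exact lam_zero hA hC hzo hod2 v
      rw [gfun] at hg
      obtain ⟨y, hyI, hy⟩ := Finset.exists_ne_zero_of_sum_ne_zero hg
      rw [col] at hy
      obtain ⟨x, hxI, hx⟩ := Finset.exists_ne_zero_of_sum_ne_zero hy
      rw [Finset.mem_Icc] at hyI hxI
      have htr : ∀ i : Fin m, i ≠ d → i ≠ o →
          (⟨setC d (setC o v y) x, d, o⟩ : Plaq m).v i = v i := by
        intro i h1 h2
        show (setC d (setC o v y) x) i = v i
        rw [setC_apply_ne d i _ _ h1, setC_apply_ne o i _ _ h2]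
      have hf := hfar' _ hx htr
      have hxw := hwz _ hx
      have hyw := hwo _ hx
      dsimp only at hf hxw hyw
      rw [setC_apply_self] at hf hxw
      rw [setC_apply_ne d o _ _ (ne_of_gt hzo), setC_apply_self] at hf hyw
      have e1 : |x - v d| ≤ bz - az := abs_le.mpr ⟨by omega, by omega⟩
      have e2 : |y - v o| ≤ bo - ao - 1 := abs_le.mpr ⟨by omega, by omega⟩
      linarith
    · have c1 : ghat N ν d o (bz + 1) v = gfun N ν d o v := by
        unfold ghat
        rw [if_pos (by omega)]
      have c2 : ghat N ν d o (bz + 1) (v + unit m d) = gfun N ν d o v := by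
        unfold ghat
        rw [if_pos (by rw [hvz1]; omega), gfun_absorb_z (ne_of_lt hzo)]
      rw [c1, c2]
      exact zadd _
  · have hzd : z < d := hz0 d hdz
    have hvdz : (v + unit m d) z = v z := by
      rw [add_unit_apply, if_neg (ne_of_lt hzd), add_zero]
    have hsupp2 : ∀ x, ν ⟨setC z v x, z, d⟩ ≠ 0 → az ≤ x ∧ x ≤ bz := by
      intro x hx
      have h5 := hwz _ hx
      dsimp only at h5
      rwa [setC_apply_self] at h5
    by_cases hhigh : bz + 1 ≤ v z
    · have hs2 : sig2 N ν z ⟨v, d⟩ = col N ν z v d := by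
        simp only [sig2, if_neg hdz, col]
        exact sum_win hsupp2 (by omega) (by omega) (by omega) (by omega)
      have hgg : gfun N ν z o v + gfun N ν z o (v + unit m d) = col N ν z v d := by
        rcases eq_or_ne d o with hdo | hdo
        · subst hdo
          exact dg_o (ne_of_lt hzo) (by linarith)
        · exact dg_d hA hC hzo (ho0 d hdz hdo)
            (by have := abs_le.mp (hev' o); linarith [this.2])
      have c1 : ghat N ν z o (bz + 1) v = gfun N ν z o v := by
        unfold ghat
        rw [if_pos hhigh]
      have c2 : ghat N ν z o (bz + 1) (v + unit m d) = gfun N ν z o (v + unit m d) := by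
        unfold ghat
        rw [if_pos (by rw [hvdz]; exact hhigh)]
      rw [hs2, c1, c2, hgg]
      exact zadd _
    · have hs2 : sig2 N ν z ⟨v, d⟩ = 0 := by
        simp only [sig2, if_neg hdz]
        apply Finset.sum_eq_zero
        intro x hxI
        by_contra hx
        rw [Finset.mem_Icc] at hxI
        have htr : ∀ i : Fin m, i ≠ z → i ≠ o →
            (⟨setC z v x, z, d⟩ : Plaq m).v i = v i := fun i h1 _ =>
          setC_apply_ne z i _ _ h1
        have hf := hfar' _ hx htr
        have hxw := hwz _ hx
        dsimp only at hf hxw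
        rw [setC_apply_self] at hf hxw
        rw [setC_apply_ne z o _ _ (ne_of_gt hzo)] at hf
        rw [sub_self, abs_zero, add_zero] at hf
        have e1 : |x - v z| ≤ bz - az := abs_le.mpr ⟨by omega, by omega⟩
        linarith
      have c1 : ghat N ν z o (bz + 1) v = 0 := by
        unfold ghat
        rw [if_neg hhigh]
      have c2 : ghat N ν z o (bz + 1) (v + unit m d) = 0 := by
        unfold ghat
        rw [if_neg (by rw [hvdz]; exact hhigh)]
      rw [hs2, c1, c2, add_zero, add_zero]

end bigzero


end P19


/-- **Lemma (vortices far from the loop are large)**: there is `Ĉ_m > 0` such that any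
vortex `ν` supported in `B_{N-1}` with `ν(q) ≠ 0` and `dist(supp ν, supp γ) = j ≥ 1`
satisfies `|(supp ν)^+| ≥ Ĉ_m·(j+1)`. -/
theorem statement19 (m : ℕ) (hm : 3 ≤ m) :
    ∃ Chat : ℝ, 0 < Chat ∧
      ∀ N : ℕ, ∀ γ : Edge m → ℤ, IsLoop m γ →
      ∀ q : Plaq m → ℤ, IsSurfaceFor m q γ → (∀ p, q p ≠ 0 → p ∈ plaqFinset m N) →
      ∀ j : ℕ, 1 ≤ j →
      ∀ ν : Form2 m, IsVortex m N ν →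
        (∀ p : Plaq m, ν p ≠ 0 → ∀ x ∈ plaqPts m p, inBox m (N - 1) x) →
        eval2 m ν q ≠ 0 →
        plaqEdgeSetDist m (↑(supp2 m N ν)) (suppChain m γ) = j →
        Chat * ((j : ℝ) + 1) ≤ ((supp2 m N ν).card : ℝ) := by
  classical
  refine ⟨1/2, by norm_num, ?_⟩
  intro N γ hloop q hq hqN j hj ν hν hsupp heval hdist
  by_contra hcon
  push_neg at hcon
  obtain ⟨hνne, hsuppIn, hclosed, hconn⟩ := hν
  apply heval
  rcases Nat.eq_zero_or_pos N with hN0 | hN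
  · subst hN0
    have hq0 : ∀ p, q p = 0 := by
      intro p
      by_contra hp
      obtain ⟨hij, h1, h2⟩ := P19.mem_plaqF.mp (hqN p hp)
      have hA2 := h2 p.i
      rw [P19.add_unit_apply, P19.add_unit_apply, if_pos rfl,
        if_neg (ne_of_lt hij)] at hA2
      have hA1 := h1 p.i
      rw [abs_le] at hA1 hA2
      omega
    unfold eval2
    rw [show (fun p : Plaq m => ((q p : ZMod 2)) * ν p) = fun _ => (0 : ZMod 2) from by
      funext p
      rw [hq0 p]
      simp]
    exact finsum_zero
  -- main case
  have hA : P19.HA N ν := by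
    intro p hp ℓ
    have h5 := hsupp p hp p.v (by simp [plaqPts]) ℓ
    rwa [show ((N - 1 : ℕ) : ℤ) = (N : ℤ) - 1 from by
        rw [Nat.cast_sub hN]
        norm_num] at h5
  have hVmem : ∀ p : Plaq m, ν p ≠ 0 → p ∈ supp2 m N ν := by
    intro p hp
    rw [supp2, Finset.mem_filter]
    refine ⟨?_, hp⟩
    by_contra h
    exact hp (hsuppIn p h)
  have hVne : (supp2 m N ν).Nonempty := by
    obtain ⟨p, hp⟩ := Function.ne_iff.mp hνne
    exact ⟨p, hVmem p hp⟩
  have hn1 : 1 ≤ (supp2 m N ν).card := Finset.card_pos.mpr hVne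
  have h2n : 2 * (supp2 m N ν).card ≤ j := by
    have hr2 : ((2 * (supp2 m N ν).card : ℕ) : ℝ) < ((j + 1 : ℕ) : ℝ) := by
      push_cast
      linarith
    have := Nat.cast_lt.mp hr2
    omega
  have hC : P19.HC ν := P19.closedAll N ν hclosed hA
  have h0 : 0 < m := by omega
  have h1m : 1 < m := by omega
  have h2m : 2 < m := by omega
  set z : Fin m := ⟨0, h0⟩ with hz
  set o : Fin m := ⟨1, h1m⟩ with ho
  set d2 : Fin m := ⟨2, h2m⟩ with hd2
  have hzo : z < o := by
    rw [hz, ho]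
    exact Fin.mk_lt_mk.mpr (by omega)
  have hod2 : o < d2 := by
    rw [ho, hd2]
    exact Fin.mk_lt_mk.mpr (by omega)
  have hz0 : ∀ d : Fin m, d ≠ z → z < d := by
    intro d hd
    have hdval : d.val ≠ 0 := by
      intro hvv
      exact hd (by rw [hz]; exact Fin.ext hvv)
    rw [hz, Fin.lt_def]
    exact Nat.pos_of_ne_zero hdval
  have ho0 : ∀ d : Fin m, d ≠ z → d ≠ o → o < d := by
    intro d hdz hdo
    have e1 : d.val ≠ 0 := by
      intro hvv
      exact hdz (by rw [hz]; exact Fin.ext hvv)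
    have e2 : d.val ≠ 1 := by
      intro hvv
      exact hdo (by rw [ho]; exact Fin.ext hvv)
    rw [ho, Fin.lt_def]
    show 1 < d.val
    omega
  obtain ⟨az, bz, hwz', hWz, hza, hzb⟩ := P19.window N ν hconn hVne z
  obtain ⟨ao, bo, hwo', hWo, hoa, hob⟩ := P19.window N ν hconn hVne o
  have hwz : ∀ p : Plaq m, ν p ≠ 0 → az ≤ p.v z ∧ p.v z ≤ bz :=
    fun p hp => hwz' p (hVmem p hp)
  have hwo : ∀ p : Plaq m, ν p ≠ 0 → ao ≤ p.v o ∧ p.v o ≤ bo :=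
    fun p hp => hwo' p (hVmem p hp)
  have hsupp2mem : ∀ p ∈ supp2 m N ν, ν p ≠ 0 := fun p hp => (Finset.mem_filter.mp hp).2
  have hazK : -(N : ℤ) + 1 ≤ az := by
    obtain ⟨p, hp, hpa⟩ := hza
    have h5 := hA p (hsupp2mem p hp) z
    rw [hpa] at h5
    rcases abs_le.mp h5 with ⟨u1, u2⟩
    omega
  have hbzK : bz ≤ (N : ℤ) - 1 := by
    obtain ⟨p, hp, hpb⟩ := hzb
    have h5 := hA p (hsupp2mem p hp) z
    rw [hpb] at h5
    exact (abs_le.mp h5).2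
  have haoK : -(N : ℤ) + 1 ≤ ao := by
    obtain ⟨p, hp, hpa⟩ := hoa
    have h5 := hA p (hsupp2mem p hp) o
    rw [hpa] at h5
    rcases abs_le.mp h5 with ⟨u1, u2⟩
    omega
  have hboK : bo ≤ (N : ℤ) - 1 := by
    obtain ⟨p, hp, hpb⟩ := hob
    have h5 := hA p (hsupp2mem p hp) o
    rw [hpb] at h5
    exact (abs_le.mp h5).2
  have hcast2n : (2 * (supp2 m N ν).card : ℤ) ≤ (j : ℤ) := by exact_mod_cast h2n
  have hcard1 : (1 : ℤ) ≤ ((supp2 m N ν).card : ℤ) := by exact_mod_cast hn1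
  have hj1 : bz - az < (j : ℤ) := by linarith
  have hj2 : bz - az + (bo - ao) < (j : ℤ) := by linarith
  set Q : Finset (Plaq m) := hq.1.toFinset with hQdef
  have hQmem : ∀ p : Plaq m, p ∈ Q ↔ q p ≠ 0 := fun p => hq.1.mem_toFinset
  set E : Finset (Edge m) := Q.biUnion (fun p => plaqBoundary m p) with hEdef
  have hchain : ∀ e : Edge m, chain2Bd m q e = ∑ p ∈ Q, q p * bdCoeff m p e := by
    intro e
    unfold chain2Bd
    apply finsum_eq_sum_of_support_subset
    intro p hp
    rw [Function.mem_support] at hp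
    rw [Finset.mem_coe, hQmem]
    intro h0'
    exact hp (by rw [h0', zero_mul])
  have hedge : ∀ e : Edge m, γ e ≠ 0 → P19.sig3 N ν z o (bz + 1) e = 0 := by
    intro e he
    have hch : chain2Bd m q e ≠ 0 := by
      rw [hq.2.2 e]
      exact he
    rw [hchain e] at hch
    obtain ⟨p, hpQ, hpne⟩ := Finset.exists_ne_zero_of_sum_ne_zero hch
    have hqp : q p ≠ 0 := (hQmem p).mp hpQ
    obtain ⟨hij, hb1, hb2⟩ := P19.mem_plaqF.mp (hqN p hqp)
    have hbd : bdCoeff m p e ≠ 0 := fun h0' => hpne (by rw [h0', mul_zero])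
    have hb2' : ∀ ℓ, |p.v ℓ + (if ℓ = p.i then 1 else 0) + (if ℓ = p.j then 1 else 0)|
        ≤ (N : ℤ) := by
      intro ℓ
      have h5 := hb2 ℓ
      rwa [P19.add_unit_apply, P19.add_unit_apply] at h5
    have key : ∀ k : Fin m, k = p.i ∨ k = p.j → ∀ ℓ, |(p.v + unit m k) ℓ| ≤ (N : ℤ) := by
      intro k hk ℓ
      have w2 := (abs_le.mp (hb2' ℓ)).2
      have w1 := (abs_le.mp (hb1 ℓ)).1
      have w3 := (abs_le.mp (hb1 ℓ)).2
      rw [P19.add_unit_apply, abs_le]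
      rcases hk with hk | hk <;> subst hk <;> constructor <;> split_ifs at w2 ⊢ <;> omega
    have keyd : ∀ k : Fin m, k = p.i ∨ k = p.j → p.v k ≤ (N : ℤ) - 1 := by
      intro k hk
      have w2 := (abs_le.mp (hb2' k)).2
      rcases hk with hk | hk <;> subst hk
      · have hx0 : (if p.i = p.i then (1 : ℤ) else 0) = 1 := if_pos rfl
        rw [hx0] at w2
        have hx1 : (0 : ℤ) ≤ if p.i = p.j then (1 : ℤ) else 0 := by split <;> omega
        omega
      · have hx0 : (if p.j = p.j then (1 : ℤ) else 0) = 1 := if_pos rfl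
        rw [hx0] at w2
        have hx1 : (0 : ℤ) ≤ if p.j = p.i then (1 : ℤ) else 0 := by split <;> omega
        omega
    have hev : ∀ ℓ, |e.v ℓ| ≤ (N : ℤ) := by
      rcases P19.bd_cases hbd with h | h | h | h <;> subst h
      · exact hb1
      · exact key p.i (Or.inl rfl)
      · exact key p.j (Or.inr rfl)
      · exact hb1
    have hevd : e.v e.dir ≤ (N : ℤ) - 1 := by
      rcases P19.bd_cases hbd with h | h | h | h <;> subst h
      · exact keyd p.i (Or.inl rfl)
      · show (p.v + unit m p.i) p.j ≤ (N : ℤ) - 1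
        rw [P19.add_unit_apply, if_neg (ne_of_gt hij), add_zero]
        exact keyd p.j (Or.inr rfl)
      · show (p.v + unit m p.j) p.i ≤ (N : ℤ) - 1
        rw [P19.add_unit_apply, if_neg (ne_of_lt hij), add_zero]
        exact keyd p.i (Or.inl rfl)
      · exact keyd p.j (Or.inr rfl)
    have hfar : ∀ p' : Plaq m, ν p' ≠ 0 →
        (∀ i : Fin m, i ≠ z → i ≠ o → p'.v i = e.v i) →
        (j : ℤ) ≤ |p'.v z - e.v z| + |p'.v o - e.v o| := by
      intro p' hp' htrans
      have hj' : j ≤ dist1 m p'.v e.v := by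
        rw [← hdist]
        apply Nat.sInf_le
        exact ⟨p', Finset.mem_coe.mpr (hVmem p' hp'), e, he, p'.v, by simp [plaqPts],
          e.v, by simp [edgePts], rfl⟩
      calc (j : ℤ) ≤ (dist1 m p'.v e.v : ℤ) := by exact_mod_cast hj'
        _ = |p'.v z - e.v z| + |p'.v o - e.v o| :=
            P19.dist1_two z o (ne_of_lt hzo) p'.v e.v htrans
    exact P19.sig3_zero hA hC hz0 ho0 hzo hod2 az bz ao bo j hwz hwo hazK hbzK haoK
      hboK hj1 hj2 e hev hevd hfar
  -- final computation
  have hQsub : Function.support (fun p : Plaq m => ((q p : ZMod 2)) * ν p) ⊆ ↑Q := by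
    intro p hp
    rw [Function.mem_support] at hp
    rw [Finset.mem_coe, hQmem]
    intro h0'
    exact hp (by rw [h0']; simp)
  unfold eval2
  rw [finsum_eq_sum_of_support_subset _ hQsub]
  have hEmem : ∀ p ∈ Q, ∀ ed ∈ plaqBoundary m p, ed ∈ E :=
    fun p hp ed hed => Finset.mem_biUnion.mpr ⟨p, hp, hed⟩
  have hcast : ∀ (c : Prop) (inst : Decidable c),
      ((@ite ℤ c inst 1 0 : ℤ) : ZMod 2) = @ite (ZMod 2) c inst 1 0 := by
    intro c inst
    split <;> simp
  have hper : ∀ p ∈ Q, (q p : ZMod 2) * ν p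
      = ∑ ed ∈ E, (q p : ZMod 2) * (((bdCoeff m p ed : ℤ) : ZMod 2) *
          P19.sig3 N ν z o (bz + 1) ed) := by
    intro p hpQ
    have hqp : q p ≠ 0 := (hQmem p).mp hpQ
    obtain ⟨hij, hb1, hb2⟩ := P19.mem_plaqF.mp (hqN p hqp)
    have hvz : -(N : ℤ) ≤ p.v z := (abs_le.mp (hb1 z)).1
    rw [← Finset.mul_sum]
    congr 1
    have hexp : ∀ ed : Edge m, ((bdCoeff m p ed : ℤ) : ZMod 2)
        = (if ed = (⟨p.v, p.i⟩ : Edge m) then 1 else 0)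
          + ((if ed = (⟨p.v + unit m p.i, p.j⟩ : Edge m) then 1 else 0)
          + ((if ed = (⟨p.v + unit m p.j, p.i⟩ : Edge m) then 1 else 0)
          + (if ed = (⟨p.v, p.j⟩ : Edge m) then 1 else 0))) := by
      intro ed
      unfold bdCoeff
      rw [Int.cast_sub, Int.cast_sub, Int.cast_add, hcast, hcast, hcast, hcast]
      exact P19.zsub4 _ _ _ _
    have hsplit : ∑ ed ∈ E, ((bdCoeff m p ed : ℤ) : ZMod 2) *
          P19.sig3 N ν z o (bz + 1) ed
        = (∑ ed ∈ E, (if ed = (⟨p.v, p.i⟩ : Edge m)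
              then P19.sig3 N ν z o (bz + 1) ed else 0))
          + ((∑ ed ∈ E, (if ed = (⟨p.v + unit m p.i, p.j⟩ : Edge m)
              then P19.sig3 N ν z o (bz + 1) ed else 0))
          + ((∑ ed ∈ E, (if ed = (⟨p.v + unit m p.j, p.i⟩ : Edge m)
              then P19.sig3 N ν z o (bz + 1) ed else 0))
          + (∑ ed ∈ E, (if ed = (⟨p.v, p.j⟩ : Edge m)
              then P19.sig3 N ν z o (bz + 1) ed else 0)))) := by
      rw [← Finset.sum_add_distrib, ← Finset.sum_add_distrib, ← Finset.sum_add_distrib]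
      apply Finset.sum_congr rfl
      intro ed _
      rw [hexp ed]
      simp only [add_mul, ite_mul, one_mul, zero_mul]
    rw [hsplit, Finset.sum_ite_eq' E (⟨p.v, p.i⟩ : Edge m),
      Finset.sum_ite_eq' E (⟨p.v + unit m p.i, p.j⟩ : Edge m),
      Finset.sum_ite_eq' E (⟨p.v + unit m p.j, p.i⟩ : Edge m),
      Finset.sum_ite_eq' E (⟨p.v, p.j⟩ : Edge m),
      if_pos (hEmem p hpQ _ (by simp [plaqBoundary])),
      if_pos (hEmem p hpQ _ (by simp [plaqBoundary])),
      if_pos (hEmem p hpQ _ (by simp [plaqBoundary])),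
      if_pos (hEmem p hpQ _ (by simp [plaqBoundary]))]
    have hd3 := P19.dsig3 (o := o) hA hC hz0 (bz + 1) hij hvz
    rw [← hd3]
    ring
  rw [Finset.sum_congr rfl hper, Finset.sum_comm]
  apply Finset.sum_eq_zero
  intro ed _
  by_cases hγ : γ ed = 0
  · have hpull : ∑ p ∈ Q, (q p : ZMod 2) * (((bdCoeff m p ed : ℤ) : ZMod 2) *
          P19.sig3 N ν z o (bz + 1) ed)
        = ((∑ p ∈ Q, q p * bdCoeff m p ed : ℤ) : ZMod 2) *
            P19.sig3 N ν z o (bz + 1) ed := by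
      push_cast
      rw [Finset.sum_mul]
      apply Finset.sum_congr rfl
      intro p _
      ring
    rw [hpull, ← hchain ed, hq.2.2 ed, hγ]
    simp
  · apply Finset.sum_eq_zero
    intro p _
    rw [hedge ed hγ, mul_zero, mul_zero]
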